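/- Let n ≥ 1 and let δ, λ ∈ ℝ satisfy λ > δ > 0. Define Γ = (2λ − δ) I + δ 𝟙𝟙ᵀ and Ω = −(1/δ) I + (1/(δ(n+1))) 𝟙𝟙ᵀ, where 𝟙 ∈ ℝⁿ is the all-ones vector. Then every eigenvalue μ ∈ ℂ of the matrix ΓΩ (regarded as a complex n×n matrix) has strictly negative real part, i.e., spec(ΓΩ) ⊂ {z ∈ ℂ : Re z < 0}. -/

import Mathlib

open Matrix

/-- The all-ones matrix `𝟙𝟙ᵀ ∈ ℝ^{n×n}`. -/
def onesMatrix (n : ℕ) : Matrix (Fin n) (Fin n) ℝ := Matrix.of fun _ _ => (1 : ℝ)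

/-- The Cournot externality matrix `Γ = (2λ − δ) I + δ 𝟙𝟙ᵀ`. -/
noncomputable def cournotGamma (n : ℕ) (δ lam : ℝ) : Matrix (Fin n) (Fin n) ℝ :=
  (2 * lam - δ) • (1 : Matrix (Fin n) (Fin n) ℝ) + δ • onesMatrix n

/-- The linear part of the Cournot Nash equilibrium map,
`Ω = −(1/δ) I + (1/(δ(n+1))) 𝟙𝟙ᵀ`. -/
noncomputable def cournotOmega (n : ℕ) (δ : ℝ) : Matrix (Fin n) (Fin n) ℝ :=
  -(1 / δ) • (1 : Matrix (Fin n) (Fin n) ℝ) + (1 / (δ * (n + 1))) • onesMatrix n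

/-!
`Γ` and `Ω` both lie in the commutative algebra spanned by `I` and `J = 𝟙𝟙ᵀ`, and `J² = nJ`.
Hence `ΓΩ = αI + βJ` is annihilated by `(X − α)(X − (α + nβ))`, so its only possible
eigenvalues are the real numbers `α = (δ − 2λ)/δ` (on `𝟙^⊥`) and
`α + nβ = (δ − 2λ − nδ)/(δ(n + 1))` (on `𝟙`), both negative when `λ > δ > 0`.
-/

open Polynomial in
theorem spectrum.subset_pair_of_mul_sub_algebraMap_eq_zero {𝕜 A : Type*} [Field 𝕜] [Ring A]
    [Algebra 𝕜 A] {a : A} {r s : 𝕜}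
    (h : (a - algebraMap 𝕜 A r) * (a - algebraMap 𝕜 A s) = 0) :
    spectrum 𝕜 a ⊆ {r, s} := by
  intro μ hμ
  have hp : aeval a ((X - C r) * (X - C s)) = 0 := by simpa using h
  have hmem := spectrum.subset_polynomial_aeval a ((X - C r) * (X - C s)) ⟨μ, hμ, rfl⟩
  rw [hp, spectrum.mem_iff, sub_zero] at hmem
  have hroot : (μ - r) * (μ - s) = 0 := by
    by_contra hne
    exact hmem ((Ne.isUnit (by simpa using hne)).map (algebraMap 𝕜 A))
  rcases mul_eq_zero.mp hroot with hr | hs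
  · exact Or.inl (sub_eq_zero.mp hr)
  · exact Or.inr (sub_eq_zero.mp hs)

theorem Matrix.spectrum_map_subset_pair {K L ι : Type*} [Field K] [Field L] [Algebra K L]
    [Fintype ι] [DecidableEq ι] {M : Matrix ι ι K} {r s : K}
    (h : (M - r • 1) * (M - s • 1) = 0) :
    spectrum L (M.map (algebraMap K L)) ⊆ {algebraMap K L r, algebraMap K L s} := by
  apply spectrum.subset_pair_of_mul_sub_algebraMap_eq_zero
  simp only [← Algebra.algebraMap_eq_smul_one] at h
  simp only [← IsScalarTower.algebraMap_apply]
  have h' := congrArg (Algebra.ofId K L).mapMatrix h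
  rwa [map_mul, map_sub, map_sub, AlgHom.commutes, AlgHom.commutes, map_zero] at h'

theorem smul_one_add_smul_sub_mul_sub_eq_zero {R A : Type*} [CommRing R] [Ring A] [Algebra R A]
    {j : A} {c : R} (hj : j * j = c • j) (a b : R) :
    (a • 1 + b • j - a • 1) * (a • 1 + b • j - (a + c * b) • 1) = 0 := by
  rw [add_sub_cancel_left, add_smul, ← sub_sub, add_sub_cancel_left, mul_sub, smul_mul_smul_comm,
    hj, smul_mul_smul_comm, mul_one, smul_smul, ← sub_smul,
    show b * b * c - b * (c * b) = 0 by ring, zero_smul]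

theorem onesMatrix_mul_self (n : ℕ) : onesMatrix n * onesMatrix n = (n : ℝ) • onesMatrix n := by
  ext i j
  simp [onesMatrix, Matrix.mul_apply]

theorem cournotGamma_mul_cournotOmega (n : ℕ) {δ : ℝ} (hδ : δ ≠ 0) (lam : ℝ) :
    cournotGamma n δ lam * cournotOmega n δ =
      ((δ - 2 * lam) / δ) • (1 : Matrix (Fin n) (Fin n) ℝ)
        + ((2 * lam - 2 * δ) / (δ * (n + 1))) • onesMatrix n := by
  have hn : (n : ℝ) + 1 ≠ 0 := by positivity
  simp only [cournotGamma, cournotOmega, add_mul, mul_add, smul_mul_smul_comm, one_mul, mul_one,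
    onesMatrix_mul_self, smul_smul]
  match_scalars <;> field_simp <;> ring

theorem cournot_eigenvalues_neg (n : ℕ) {δ lam : ℝ} (hδ : 0 < δ) (hlam : δ < lam) :
    (δ - 2 * lam) / δ < 0 ∧
      (δ - 2 * lam) / δ + n * ((2 * lam - 2 * δ) / (δ * (n + 1))) < 0 := by
  have hsum : (δ - 2 * lam) / δ + n * ((2 * lam - 2 * δ) / (δ * (n + 1)))
      = (δ - 2 * lam - n * δ) / (δ * (n + 1)) := by
    field_simp
    ring
  have hnδ : 0 ≤ n * δ := by positivity
  exact ⟨div_neg_of_neg_of_pos (by linarith) hδ,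
    hsum ▸ div_neg_of_neg_of_pos (by linarith) (by positivity)⟩

theorem cournot_gamma_omega_hurwitz_general
    (n : ℕ) (δ lam : ℝ) (hδ : 0 < δ) (hlam : δ < lam) :
    ∀ μ ∈ spectrum ℂ
        ((cournotGamma n δ lam * cournotOmega n δ).map (algebraMap ℝ ℂ)),
      μ.re < 0 := by
  obtain ⟨hα, hαβ⟩ := cournot_eigenvalues_neg n hδ hlam
  intro μ hμ
  rw [cournotGamma_mul_cournotOmega n hδ.ne'] at hμ
  rcases Matrix.spectrum_map_subset_pair
    (smul_one_add_smul_sub_mul_sub_eq_zero (onesMatrix_mul_self n) _ _) hμ with rfl | rfl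
    <;> rwa [Complex.coe_algebraMap, Complex.ofReal_re]

/-- Lemma A.2: if `λ > δ > 0` then every complex eigenvalue of `ΓΩ`
has strictly negative real part, i.e. `−ΓΩ` is Hurwitz. -/
theorem cournot_gamma_omega_hurwitz
    (n : ℕ) (hn : 1 ≤ n) (δ lam : ℝ) (hδ : 0 < δ) (hlam : δ < lam) :
    ∀ μ ∈ spectrum ℂ
        ((cournotGamma n δ lam * cournotOmega n δ).map (algebraMap ℝ ℂ)),
      μ.re < 0 :=
  cournot_gamma_omega_hurwitz_general n δ lam hδ hlam
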